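/- arXiv:2604.19290 — 3 statements merged into one kernel-verified Lean document; each statement's English description precedes it below -/
import Mathlib

section
/- Let λ₁, λ₂ > 0 with λ₁ ≠ λ₂, and let β₂, β₃, β₄ ∈ ℝ with β₃ ≠ 0 and β₄ ≠ 0. Define the six functions on (0, ∞): g₁(τ) = τ; g₂(τ) = (1 − e^{−λ₁τ})/λ₁; g₃(τ) = (1 − e^{−λ₁τ})/λ₁ − τe^{−λ₁τ}; g₄(τ) = (1 − e^{−λ₂τ})/λ₂ − τe^{−λ₂τ}; g₅(τ) = −(β₂+β₃)/λ₁² + ((β₂+β₃)/λ₁²)e^{−λ₁τ} + ((β₂+β₃)/λ₁)τe^{−λ₁τ} + β₃τ²e^{−λ₁τ}; g₆(τ) = −β₄/λ₂² + (β₄/λ₂²)e^{−λ₂τ} + (β₄/λ₂)τe^{−λ₂τ} + β₄τ²e^{−λ₂τ}. Then g₁, …, g₆ are linearly independent over ℝ as functions on (0, ∞). -/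
/-!
Collecting terms, a vanishing combination of the `gᵢ` reads
`p(τ) + q(τ) e^{-λ₁τ} + r(τ) e^{-λ₂τ} = 0` with polynomials `p, q, r` of degree at most two.
For `0 < μ < ν`, each of `p`, `q e^{-μτ}`, `r e^{-ντ}` dominates the later ones as `τ → ∞`,
and a polynomial tending to `0` at infinity vanishes; so `p`, `q`, `r` vanish one after the
other. Their coefficients are triangular in `c₁, …, c₆`, the leading ones being `c₅ β₃` and
`c₆ β₄`, which forces all `cᵢ = 0`.
-/

open Filter Topology Polynomial Real

namespace Polynomial

theorem tendsto_eval_mul_exp_neg_atTop (p : ℝ[X]) {μ : ℝ} (hμ : 0 < μ) :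
    Tendsto (fun τ => p.eval τ * exp (-(μ * τ))) atTop (𝓝 0) := by
  have hp : (fun τ => p.eval τ) =o[atTop] fun τ => exp (μ * τ) :=
    (isBigO_atTop_of_degree_le p (X ^ p.natDegree) (by simp)).trans_isLittleO
      (by simpa using isLittleO_pow_exp_pos_mul_atTop p.natDegree hμ)
  simpa [exp_neg, div_eq_mul_inv] using hp.tendsto_div_nhds_zero

section OrderedField

variable {𝕜 : Type*} [NormedField 𝕜] [LinearOrder 𝕜] [IsStrictOrderedRing 𝕜] [OrderTopology 𝕜]
  {p : 𝕜[X]}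

theorem eq_zero_of_tendsto_eval_atTop_zero
    (h : Tendsto (fun x => p.eval x) atTop (𝓝 0)) : p = 0 :=
  leadingCoeff_eq_zero.1 ((tendsto_nhds_iff p).1 h).1

theorem eq_zero_of_eventually_eval_add_eq_zero {f : 𝕜 → 𝕜} (hf : Tendsto f atTop (𝓝 0))
    (h : ∀ᶠ x in atTop, p.eval x + f x = 0) : p = 0 := by
  refine eq_zero_of_tendsto_eval_atTop_zero ?_
  simpa using hf.neg.congr' (h.mono fun x hx => (eq_neg_of_add_eq_zero_left hx).symm)

end OrderedField

theorem eq_zero_of_eval_add_mul_exp_neg_add_mul_exp_neg {p q r : ℝ[X]} {μ ν : ℝ}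
    (hμ : 0 < μ) (hμν : μ < ν)
    (h : ∀ᶠ τ in atTop,
      p.eval τ + q.eval τ * exp (-(μ * τ)) + r.eval τ * exp (-(ν * τ)) = 0) :
    p = 0 ∧ q = 0 ∧ r = 0 := by
  have hν : 0 < ν := hμ.trans hμν
  have hp : p = 0 := eq_zero_of_eventually_eval_add_eq_zero
    (by simpa using
      (q.tendsto_eval_mul_exp_neg_atTop hμ).add (r.tendsto_eval_mul_exp_neg_atTop hν))
    (by simpa only [add_assoc] using h)
  -- dividing by `exp (-(μ * τ))` makes the `q`-term dominant
  have hq : q = 0 := by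
    refine eq_zero_of_eventually_eval_add_eq_zero
      (r.tendsto_eval_mul_exp_neg_atTop (sub_pos.2 hμν)) (h.mono fun τ hτ => ?_)
    have hexp : exp (-(ν * τ)) = exp (-((ν - μ) * τ)) * exp (-(μ * τ)) := by
      rw [← exp_add]; ring_nf
    rw [hp, eval_zero, zero_add, hexp, ← mul_assoc, ← add_mul] at hτ
    exact (mul_eq_zero.1 hτ).resolve_right (exp_pos _).ne'
  have hr : r = 0 := by
    refine eq_zero_of_eventually_eval_add_eq_zero (f := 0) tendsto_const_nhds
      (h.mono fun τ hτ => ?_)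
    rw [hp, hq, eval_zero, zero_mul, zero_add, zero_add] at hτ
    simpa using (mul_eq_zero.1 hτ).resolve_right (exp_pos _).ne'
  exact ⟨hp, hq, hr⟩

theorem eq_zero_of_eval_add_mul_exp_neg_add_mul_exp_neg_of_ne {p q r : ℝ[X]} {μ ν : ℝ}
    (hμ : 0 < μ) (hν : 0 < ν) (hμν : μ ≠ ν)
    (h : ∀ᶠ τ in atTop,
      p.eval τ + q.eval τ * exp (-(μ * τ)) + r.eval τ * exp (-(ν * τ)) = 0) :
    p = 0 ∧ q = 0 ∧ r = 0 := by
  rcases hμν.lt_or_gt with hlt | hlt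
  · exact eq_zero_of_eval_add_mul_exp_neg_add_mul_exp_neg hμ hlt h
  · obtain ⟨hp, hr, hq⟩ :=
      eq_zero_of_eval_add_mul_exp_neg_add_mul_exp_neg (p := p) (q := r) (r := q) hν hlt
      (h.mono fun _ hτ => (add_right_comm _ _ _).trans hτ)
    exact ⟨hp, hq, hr⟩

theorem C_add_C_mul_X_add_C_mul_X_sq_eq_zero {R : Type*} [CommRing R] {a b c : R}
    (h : C a + C b * X + C c * X ^ 2 = 0) : a = 0 ∧ b = 0 ∧ c = 0 := by
  refine ⟨?_, ?_, ?_⟩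
  · simpa using congrArg (coeff · 0) h
  · simpa using congrArg (coeff · 1) h
  · simpa using congrArg (coeff · 2) h

end Polynomial

/-- The six maturity-scaled NSS sensitivity functions are linearly
independent on `(0, ∞)` when `λ₁ ≠ λ₂`, `β₃ ≠ 0`, and `β₄ ≠ 0`. -/
theorem stmt12
    (lam₁ lam₂ : ℝ) (hlam₁ : 0 < lam₁) (hlam₂ : 0 < lam₂) (hne : lam₁ ≠ lam₂)
    (β₂ β₃ β₄ : ℝ) (hβ₃ : β₃ ≠ 0) (hβ₄ : β₄ ≠ 0)
    (g₁ g₂ g₃ g₄ g₅ g₆ : ℝ → ℝ)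
    (hg₁ : ∀ τ : ℝ, 0 < τ → g₁ τ = τ)
    (hg₂ : ∀ τ : ℝ, 0 < τ → g₂ τ = (1 - Real.exp (-lam₁ * τ)) / lam₁)
    (hg₃ : ∀ τ : ℝ, 0 < τ →
      g₃ τ = (1 - Real.exp (-lam₁ * τ)) / lam₁ - τ * Real.exp (-lam₁ * τ))
    (hg₄ : ∀ τ : ℝ, 0 < τ →
      g₄ τ = (1 - Real.exp (-lam₂ * τ)) / lam₂ - τ * Real.exp (-lam₂ * τ))
    (hg₅ : ∀ τ : ℝ, 0 < τ →
      g₅ τ = -(β₂ + β₃) / lam₁ ^ 2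
        + ((β₂ + β₃) / lam₁ ^ 2) * Real.exp (-lam₁ * τ)
        + ((β₂ + β₃) / lam₁) * (τ * Real.exp (-lam₁ * τ))
        + β₃ * (τ ^ 2 * Real.exp (-lam₁ * τ)))
    (hg₆ : ∀ τ : ℝ, 0 < τ →
      g₆ τ = -β₄ / lam₂ ^ 2
        + (β₄ / lam₂ ^ 2) * Real.exp (-lam₂ * τ)
        + (β₄ / lam₂) * (τ * Real.exp (-lam₂ * τ))
        + β₄ * (τ ^ 2 * Real.exp (-lam₂ * τ)))
    (c₁ c₂ c₃ c₄ c₅ c₆ : ℝ)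
    (h : ∀ τ : ℝ, 0 < τ →
      c₁ * g₁ τ + c₂ * g₂ τ + c₃ * g₃ τ + c₄ * g₄ τ + c₅ * g₅ τ + c₆ * g₆ τ = 0) :
    c₁ = 0 ∧ c₂ = 0 ∧ c₃ = 0 ∧ c₄ = 0 ∧ c₅ = 0 ∧ c₆ = 0 := by
  obtain ⟨hp, hq, hr⟩ := eq_zero_of_eval_add_mul_exp_neg_add_mul_exp_neg_of_ne hlam₁ hlam₂ hne
    (p := C (c₂ / lam₁ + c₃ / lam₁ + c₄ / lam₂ - c₅ * (β₂ + β₃) / lam₁ ^ 2 - c₆ * β₄ / lam₂ ^ 2)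
      + C c₁ * X)
    (q := C (c₅ * (β₂ + β₃) / lam₁ ^ 2 - c₂ / lam₁ - c₃ / lam₁)
      + C (c₅ * (β₂ + β₃) / lam₁ - c₃) * X + C (c₅ * β₃) * X ^ 2)
    (r := C (c₆ * β₄ / lam₂ ^ 2 - c₄ / lam₂) + C (c₆ * β₄ / lam₂ - c₄) * X + C (c₆ * β₄) * X ^ 2)
    (by
      filter_upwards [eventually_gt_atTop 0] with τ hτ
      have hτ' := h τ hτ
      rw [hg₁ τ hτ, hg₂ τ hτ, hg₃ τ hτ, hg₄ τ hτ, hg₅ τ hτ, hg₆ τ hτ] at hτ'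
      simp only [eval_add, eval_mul, eval_C, eval_X, eval_pow, ← neg_mul]
      linear_combination hτ')
  obtain ⟨hq₀, hq₁, hq₂⟩ := C_add_C_mul_X_add_C_mul_X_sq_eq_zero hq
  obtain ⟨-, hr₁, hr₂⟩ := C_add_C_mul_X_add_C_mul_X_sq_eq_zero hr
  obtain rfl : c₅ = 0 := (mul_eq_zero.1 hq₂).resolve_right hβ₃
  obtain rfl : c₆ = 0 := (mul_eq_zero.1 hr₂).resolve_right hβ₄
  obtain rfl : c₃ = 0 := by simpa using hq₁
  obtain rfl : c₄ = 0 := by simpa using hr₁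
  refine ⟨by simpa using congrArg (coeff · 1) hp, ?_, rfl, rfl, rfl, rfl⟩
  simpa [hlam₁.ne'] using hq₀
end

section
/- Let λ > 0 and β₂, β₃, β₄ ∈ ℝ, and consider the degenerate Nelson–Siegel–Svensson model with λ₁ = λ₂ = λ, with maturity-scaled sensitivity functions g₁(τ) = τ, g₂(τ) = (1 − e^{−λτ})/λ, g₃(τ) = g₄(τ) = (1 − e^{−λτ})/λ − τe^{−λτ}, g₅(τ) = −(β₂+β₃)/λ² + ((β₂+β₃)/λ²)e^{−λτ} + ((β₂+β₃)/λ)τe^{−λτ} + β₃τ²e^{−λτ}, and g₆(τ) = −β₄/λ² + (β₄/λ²)e^{−λτ} + (β₄/λ)τe^{−λτ} + β₄τ²e^{−λτ}. Then the span of {g₁, …, g₆} in the space of functions on (0, ∞) has dimension at most 4, and is contained in the span of τ, (1 − e^{−λτ})/λ, (1 − e^{−λτ})/λ − τe^{−λτ}, and −1/λ² + e^{−λτ}/λ² + τe^{−λτ}/λ + τ²e^{−λτ}. -/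
/-- At the degenerate point `λ₁ = λ₂ = λ`, the six maturity-scaled
sensitivity functions all lie in the span of four explicit functions on `(0, ∞)`;
in particular their span has dimension at most 4. -/
theorem stmt13
    (lam : ℝ) (hlam : 0 < lam)
    (β₂ β₃ β₄ : ℝ)
    (g₁ g₂ g₃ g₄ g₅ g₆ h₁ h₂ h₃ h₄ : {τ : ℝ // 0 < τ} → ℝ)
    (hg₁ : ∀ τ, g₁ τ = (τ : ℝ))
    (hg₂ : ∀ τ, g₂ τ = (1 - Real.exp (-lam * τ)) / lam)
    (hg₃ : ∀ τ, g₃ τ = (1 - Real.exp (-lam * τ)) / lam - τ * Real.exp (-lam * τ))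
    (hg₄ : ∀ τ, g₄ τ = (1 - Real.exp (-lam * τ)) / lam - τ * Real.exp (-lam * τ))
    (hg₅ : ∀ τ, g₅ τ = -(β₂ + β₃) / lam ^ 2
        + ((β₂ + β₃) / lam ^ 2) * Real.exp (-lam * τ)
        + ((β₂ + β₃) / lam) * (τ * Real.exp (-lam * τ))
        + β₃ * ((τ : ℝ) ^ 2 * Real.exp (-lam * τ)))
    (hg₆ : ∀ τ, g₆ τ = -β₄ / lam ^ 2
        + (β₄ / lam ^ 2) * Real.exp (-lam * τ)
        + (β₄ / lam) * (τ * Real.exp (-lam * τ))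
        + β₄ * ((τ : ℝ) ^ 2 * Real.exp (-lam * τ)))
    (hh₁ : ∀ τ, h₁ τ = (τ : ℝ))
    (hh₂ : ∀ τ, h₂ τ = (1 - Real.exp (-lam * τ)) / lam)
    (hh₃ : ∀ τ, h₃ τ = (1 - Real.exp (-lam * τ)) / lam - τ * Real.exp (-lam * τ))
    (hh₄ : ∀ τ, h₄ τ = -1 / lam ^ 2 + Real.exp (-lam * τ) / lam ^ 2
        + τ * Real.exp (-lam * τ) / lam + (τ : ℝ) ^ 2 * Real.exp (-lam * τ)) :
    Submodule.span ℝ ({g₁, g₂, g₃, g₄, g₅, g₆} : Set ({τ : ℝ // 0 < τ} → ℝ))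
      ≤ Submodule.span ℝ ({h₁, h₂, h₃, h₄} : Set ({τ : ℝ // 0 < τ} → ℝ)) ∧
    Module.rank ℝ
      ↥(Submodule.span ℝ ({g₁, g₂, g₃, g₄, g₅, g₆} : Set ({τ : ℝ // 0 < τ} → ℝ)))
      ≤ 4 := by

  have hlam' : lam ≠ 0 := ne_of_gt hlam
  have h1m : h₁ ∈ Submodule.span ℝ ({h₁, h₂, h₃, h₄} : Set ({τ : ℝ // 0 < τ} → ℝ)) :=
    Submodule.subset_span (by simp)
  have h2m : h₂ ∈ Submodule.span ℝ ({h₁, h₂, h₃, h₄} : Set ({τ : ℝ // 0 < τ} → ℝ)) :=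
    Submodule.subset_span (by simp)
  have h3m : h₃ ∈ Submodule.span ℝ ({h₁, h₂, h₃, h₄} : Set ({τ : ℝ // 0 < τ} → ℝ)) :=
    Submodule.subset_span (by simp)
  have h4m : h₄ ∈ Submodule.span ℝ ({h₁, h₂, h₃, h₄} : Set ({τ : ℝ // 0 < τ} → ℝ)) :=
    Submodule.subset_span (by simp)
  have e1 : g₁ = h₁ := funext fun τ => by rw [hg₁, hh₁]
  have e2 : g₂ = h₂ := funext fun τ => by rw [hg₂, hh₂]
  have e3 : g₃ = h₃ := funext fun τ => by rw [hg₃, hh₃]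
  have e4 : g₄ = h₃ := funext fun τ => by rw [hg₄, hh₃]
  have e5 : g₅ = (-β₂ / lam) • h₃ + β₃ • h₄ := by
    funext τ
    simp only [Pi.add_apply, Pi.smul_apply, smul_eq_mul, hg₅, hh₃, hh₄]
    field_simp
    ring
  have e6 : g₆ = β₄ • h₄ := by
    funext τ
    simp only [Pi.smul_apply, smul_eq_mul, hg₆, hh₄]
    field_simp
  have hle : Submodule.span ℝ ({g₁, g₂, g₃, g₄, g₅, g₆} : Set ({τ : ℝ // 0 < τ} → ℝ))
      ≤ Submodule.span ℝ ({h₁, h₂, h₃, h₄} : Set ({τ : ℝ // 0 < τ} → ℝ)) := by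
    rw [Submodule.span_le]
    intro x hx
    simp only [Set.mem_insert_iff, Set.mem_singleton_iff] at hx
    rcases hx with rfl | rfl | rfl | rfl | rfl | rfl
    · exact e1 ▸ h1m
    · exact e2 ▸ h2m
    · exact e3 ▸ h3m
    · exact e4 ▸ h3m
    · exact e5 ▸ Submodule.add_mem _ (Submodule.smul_mem _ _ h3m) (Submodule.smul_mem _ _ h4m)
    · exact e6 ▸ Submodule.smul_mem _ _ h4m
  refine ⟨hle, le_trans (Submodule.rank_mono hle) (le_trans (rank_span_le _) ?_)⟩
  calc (Cardinal.mk ({h₁, h₂, h₃, h₄} : Set ({τ : ℝ // 0 < τ} → ℝ)))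
      ≤ Cardinal.mk ({h₂, h₃, h₄} : Set ({τ : ℝ // 0 < τ} → ℝ)) + 1 := Cardinal.mk_insert_le
    _ ≤ (Cardinal.mk ({h₃, h₄} : Set ({τ : ℝ // 0 < τ} → ℝ)) + 1) + 1 :=
        add_le_add_left Cardinal.mk_insert_le 1
    _ ≤ ((Cardinal.mk ({h₄} : Set ({τ : ℝ // 0 < τ} → ℝ)) + 1) + 1) + 1 :=
        add_le_add_left (add_le_add_left Cardinal.mk_insert_le 1) 1
    _ = 4 := by rw [Cardinal.mk_singleton]; norm_num
end

section
/- Let T > 0 and λ₁, λ₂ > 0 with λ₁ ≠ λ₂. Then the four Nelson–Siegel–Svensson basis functions on (0, T), namely φ₁(τ) = 1, φ₂(τ) = (1 − e^{−λ₁τ})/(λ₁τ), φ₃(τ) = (1 − e^{−λ₁τ})/(λ₁τ) − e^{−λ₁τ}, and φ₄(τ) = (1 − e^{−λ₂τ})/(λ₂τ) − e^{−λ₂τ}, are linearly independent as elements of L²((0, T), ℝ): if c₁φ₁ + c₂φ₂ + c₃φ₃ + c₄φ₄ = 0 almost everywhere on (0, T) for real coefficients c₁, …, c₄, then c₁ =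 c₂ = c₃ = c₄ = 0. Consequently, the 4×4 Gram matrix G_T with entries (G_T)_{ij} = ∫₀ᵀ φ_i(τ)φ_j(τ) dτ is symmetric positive definite. -/
/-!
Multiplied by `τ`, a combination `c₀ + c₁ φ₁ + c₂ φ₂ + c₃ φ₃` becomes the entire function
`a + b τ + (p + r τ) e^{-λ₁ τ} + (q + s τ) e^{-λ₂ τ}`. If the combination vanishes a.e. on
`(0, T)`, this function vanishes on `(0, T)` by continuity and hence everywhere by the
identity theorem. Letting `τ → ∞` first kills the affine part; dividing by the slower
exponential and letting `τ → ∞` again kills the remaining coefficients. Positive definiteness follows because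
`G_T` is the Gram matrix of linearly independent vectors of `L²(0, T)`.
-/

open MeasureTheory Matrix Filter Topology Real Set

theorem eq_zero_of_tendsto_affine {p r : ℝ} (h : Tendsto (fun τ => p + r * τ) atTop (𝓝 0)) :
    p = 0 ∧ r = 0 := by
  have hr : r = 0 := by
    have hdiv : Tendsto (fun τ => (p + r * τ) * τ⁻¹) atTop (𝓝 r) := by
      refine ((tendsto_inv_atTop_zero.const_mul p).add_const r).congr' ?_ |>.trans (by simp)
      filter_upwards [eventually_ne_atTop 0] with τ hτ
      field_simp
    simpa using tendsto_nhds_unique hdiv (by simpa using h.mul tendsto_inv_atTop_zero)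
  subst hr
  simp only [zero_mul, add_zero] at h
  exact ⟨tendsto_nhds_unique tendsto_const_nhds h, rfl⟩

theorem eq_zero_of_affine_add_eq_zero {p r : ℝ} {g : ℝ → ℝ} (hg : Tendsto g atTop (𝓝 0))
    (h : ∀ᶠ τ in atTop, p + r * τ + g τ = 0) : p = 0 ∧ r = 0 := by
  refine eq_zero_of_tendsto_affine ((neg_zero (G := ℝ)) ▸ hg.neg |>.congr' ?_)
  filter_upwards [h] with τ hτ
  linarith

theorem tendsto_affine_mul_exp_neg {δ : ℝ} (hδ : 0 < δ) (q s : ℝ) :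
    Tendsto (fun τ => (q + s * τ) * exp (-(δ * τ))) atTop (𝓝 0) := by
  have h := ((tendsto_rpow_mul_exp_neg_mul_atTop_nhds_zero 0 δ hδ).const_mul q).add
    ((tendsto_rpow_mul_exp_neg_mul_atTop_nhds_zero 1 δ hδ).const_mul s)
  simp only [mul_zero, add_zero, rpow_zero, rpow_one, one_mul, neg_mul] at h
  exact h.congr fun τ => by ring

theorem eq_zero_of_affine_add_affine_mul_exp_neg {δ p r q s : ℝ} (hδ : 0 < δ)
    (h : ∀ᶠ τ in atTop, p + r * τ + (q + s * τ) * exp (-(δ * τ)) = 0) :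
    p = 0 ∧ r = 0 ∧ q = 0 ∧ s = 0 := by
  obtain ⟨rfl, rfl⟩ := eq_zero_of_affine_add_eq_zero (tendsto_affine_mul_exp_neg hδ q s) h
  have hqs : ∀ᶠ τ in atTop, q + s * τ + 0 = 0 := by
    filter_upwards [h] with τ hτ
    simpa [(exp_pos _).ne'] using hτ
  exact ⟨rfl, rfl, eq_zero_of_affine_add_eq_zero tendsto_const_nhds hqs⟩

theorem eq_zero_of_affine_add_two_affine_mul_exp_neg
    {μ ν a b p r q s : ℝ} (hμ : 0 < μ) (hν : 0 < ν) (hμν : μ ≠ ν)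
    (h : ∀ᶠ τ in atTop,
      a + b * τ + (p + r * τ) * exp (-(μ * τ)) + (q + s * τ) * exp (-(ν * τ)) = 0) :
    a = 0 ∧ b = 0 ∧ p = 0 ∧ r = 0 ∧ q = 0 ∧ s = 0 := by
  wlog hlt : μ < ν generalizing μ ν p r q s
  · obtain ⟨ha, hb, hq, hs, hp, hr⟩ := this (p := q) (r := s) (q := p) (s := r) hν hμ hμν.symm
      (h.mono fun τ hτ => by linear_combination hτ) (lt_of_le_of_ne (not_lt.1 hlt) hμν.symm)
    exact ⟨ha, hb, hp, hr, hq, hs⟩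
  have hexps : Tendsto (fun τ => (p + r * τ) * exp (-(μ * τ)) + (q + s * τ) * exp (-(ν * τ)))
      atTop (𝓝 0) := by
    simpa using (tendsto_affine_mul_exp_neg hμ p r).add (tendsto_affine_mul_exp_neg hν q s)
  obtain ⟨rfl, rfl⟩ := eq_zero_of_affine_add_eq_zero (p := a) (r := b) hexps
    (h.mono fun τ hτ => by linarith)
  -- dividing by `exp (-(μ * τ))` leaves a single exponential, with rate `ν - μ > 0`
  have hpeel : ∀ᶠ τ in atTop, p + r * τ + (q + s * τ) * exp (-((ν - μ) * τ)) = 0 := by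
    filter_upwards [h] with τ hτ
    have hsplit : exp (-(ν * τ)) = exp (-((ν - μ) * τ)) * exp (-(μ * τ)) := by
      rw [← exp_add]; ring_nf
    rw [hsplit] at hτ
    refine (mul_eq_zero.1 ?_).resolve_right (exp_pos (-(μ * τ))).ne'
    linear_combination hτ
  exact ⟨rfl, rfl, eq_zero_of_affine_add_affine_mul_exp_neg (sub_pos.2 hlt) hpeel⟩

theorem eq_zero_of_analyticAt_of_ae_restrict_Ioo {f : ℝ → ℝ} (hf : ∀ x, AnalyticAt ℝ f x) {a b : ℝ}
    (hab : a < b) (h : ∀ᵐ x ∂volume.restrict (Ioo a b), f x = 0) (x : ℝ) : f x = 0 := by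
  have hIoo : EqOn f 0 (Ioo a b) := Measure.eqOn_open_of_ae_eq h isOpen_Ioo
    (fun y _ => (hf y).continuousAt.continuousWithinAt) continuousOn_const
  have hmid : f =ᶠ[𝓝 ((a + b) / 2)] 0 :=
    mem_of_superset (isOpen_Ioo.mem_nhds ⟨by linarith, by linarith⟩) hIoo
  exact AnalyticOnNhd.eqOn_zero_of_preconnected_of_eventuallyEq_zero (fun y _ => hf y)
    isPreconnected_univ (mem_univ _) hmid (mem_univ x)

theorem posDef_of_integral_mul_of_ae_independent {α ι : Type*} [MeasurableSpace α] [Fintype ι]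
    {μ : Measure α} {f : ι → α → ℝ} (hf : ∀ i, MemLp (f i) 2 μ)
    (hli : ∀ c : ι → ℝ, (∀ᵐ x ∂μ, ∑ i, c i * f i x = 0) → ∀ i, c i = 0) :
    (Matrix.of fun i j => ∫ x, f i x * f j x ∂μ).PosDef := by
  set v : ι → Lp ℝ 2 μ := fun i => (hf i).toLp
  have hv : LinearIndependent ℝ v := by
    refine Fintype.linearIndependent_iff.2 fun c hc => hli c ?_
    filter_upwards [Lp.coeFn_fun_finsetSum Finset.univ (fun i => c i • v i),
      Lp.eq_zero_iff_ae_eq_zero.1 hc, ae_all_iff.2 fun i => Lp.coeFn_smul (c i) (v i),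
      ae_all_iff.2 fun i => (hf i).coeFn_toLp] with x hsum hzero hsmul hcoe
    simp_all [v]
  suffices hG : (Matrix.of fun i j => ∫ x, f i x * f j x ∂μ) = gram ℝ v by
    simpa only [hG] using posDef_gram_of_linearIndependent hv
  refine Matrix.ext fun i j => ?_
  rw [gram_apply, L2.inner_def, of_apply]
  refine integral_congr_ae ?_
  filter_upwards [(hf i).coeFn_toLp, (hf j).coeFn_toLp] with x hi hj
  simp [v, hi, hj, mul_comm]

noncomputable def nssSlope (lam τ : ℝ) : ℝ := (1 - exp (-lam * τ)) / (lam * τ)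

noncomputable def nssCurvature (lam τ : ℝ) : ℝ := nssSlope lam τ - exp (-lam * τ)

section
variable {lam τ : ℝ}

theorem exp_neg_mul_mem_Icc (h : 0 ≤ lam * τ) : exp (-lam * τ) ∈ Icc 0 1 := by
  rw [neg_mul]
  exact ⟨(exp_pos _).le, exp_le_one_iff.2 (neg_nonpos.2 h)⟩

theorem nssSlope_mem_Icc (h : 0 ≤ lam * τ) : nssSlope lam τ ∈ Icc 0 1 := by
  have hexp := exp_neg_mul_mem_Icc h
  have hlin : 1 - exp (-lam * τ) ≤ lam * τ := by
    linarith [add_one_le_exp (-lam * τ), neg_mul lam τ]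
  exact ⟨div_nonneg (by linarith [hexp.2]) h, div_le_one_of_le₀ hlin h⟩

theorem nssCurvature_mem_Icc (h : 0 ≤ lam * τ) : nssCurvature lam τ ∈ Icc (-1) 1 := by
  obtain ⟨hs₀, hs₁⟩ := nssSlope_mem_Icc h
  obtain ⟨he₀, he₁⟩ := exp_neg_mul_mem_Icc h
  exact ⟨by unfold nssCurvature; linarith, by unfold nssCurvature; linarith⟩

end

theorem measurable_nssSlope (lam : ℝ) : Measurable (nssSlope lam) := by
  unfold nssSlope; fun_prop

theorem memLp_nssSlope {μ : Measure ℝ} [IsFiniteMeasure μ] {lam : ℝ} (hlam : 0 ≤ lam)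
    (hμ : ∀ᵐ τ ∂μ, 0 ≤ τ) (p : ENNReal) : MemLp (nssSlope lam) p μ :=
  memLp_of_bounded (hμ.mono fun _ hτ => nssSlope_mem_Icc (mul_nonneg hlam hτ))
    (measurable_nssSlope lam).aestronglyMeasurable p

theorem memLp_nssCurvature {μ : Measure ℝ} [IsFiniteMeasure μ] {lam : ℝ} (hlam : 0 ≤ lam)
    (hμ : ∀ᵐ τ ∂μ, 0 ≤ τ) (p : ENNReal) : MemLp (nssCurvature lam) p μ :=
  memLp_of_bounded (hμ.mono fun _ hτ => nssCurvature_mem_Icc (mul_nonneg hlam hτ))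
    ((measurable_nssSlope lam).sub (by fun_prop)).aestronglyMeasurable p

theorem nss_coeffs_eq_zero_of_ae_eq_zero {lam₁ lam₂ a b c₀ c₁ c₂ c₃ : ℝ}
    (h₁ : 0 < lam₁) (h₂ : 0 < lam₂) (hne : lam₁ ≠ lam₂) (hab : a < b)
    (h : ∀ᵐ τ ∂volume.restrict (Ioo a b),
      c₀ + c₁ * nssSlope lam₁ τ + c₂ * nssCurvature lam₁ τ + c₃ * nssCurvature lam₂ τ = 0) :
    c₀ = 0 ∧ c₁ = 0 ∧ c₂ = 0 ∧ c₃ = 0 := by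
  -- multiplying by `τ` clears the removable singularity at `0`
  set F : ℝ → ℝ := fun τ => (c₁ + c₂) / lam₁ + c₃ / lam₂ + c₀ * τ
    + (-((c₁ + c₂) / lam₁) + -c₂ * τ) * exp (-(lam₁ * τ))
    + (-(c₃ / lam₂) + -c₃ * τ) * exp (-(lam₂ * τ)) with hF
  have hFmul : ∀ τ ≠ 0, F τ = τ *
      (c₀ + c₁ * nssSlope lam₁ τ + c₂ * nssCurvature lam₁ τ + c₃ * nssCurvature lam₂ τ) := by
    intro τ hτ
    simp only [hF, nssCurvature, nssSlope, neg_mul]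
    field_simp
    ring
  have hFzero : ∀ τ, F τ = 0 := by
    refine eq_zero_of_analyticAt_of_ae_restrict_Ioo (fun x => by rw [hF]; fun_prop) hab ?_
    filter_upwards [h, Measure.ae_ne _ 0] with τ hτ hτ0
    rw [hFmul τ hτ0, hτ, mul_zero]
  obtain ⟨-, hc₀, hc₁₂, hc₂, -, hc₃⟩ :=
    eq_zero_of_affine_add_two_affine_mul_exp_neg h₁ h₂ hne (Eventually.of_forall hFzero)
  have hc₂' : c₂ = 0 := neg_eq_zero.1 hc₂
  refine ⟨hc₀, ?_, hc₂', neg_eq_zero.1 hc₃⟩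
  simpa [hc₂', h₁.ne'] using hc₁₂

/-- For `λ₁ ≠ λ₂`, the four NSS basis functions are linearly
independent in `L²((0,T))` (a vanishing a.e. linear combination has zero
coefficients), and consequently their Gram matrix is symmetric positive
definite. -/
theorem stmt16
    (T lam₁ lam₂ : ℝ) (hT : 0 < T)
    (h₁ : 0 < lam₁) (h₂ : 0 < lam₂) (hne : lam₁ ≠ lam₂)
    (φ : Fin 4 → ℝ → ℝ)
    (hφ0 : ∀ τ : ℝ, φ 0 τ = 1)
    (hφ1 : ∀ τ : ℝ, φ 1 τ = (1 - Real.exp (-lam₁ * τ)) / (lam₁ * τ))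
    (hφ2 : ∀ τ : ℝ,
      φ 2 τ = (1 - Real.exp (-lam₁ * τ)) / (lam₁ * τ) - Real.exp (-lam₁ * τ))
    (hφ3 : ∀ τ : ℝ,
      φ 3 τ = (1 - Real.exp (-lam₂ * τ)) / (lam₂ * τ) - Real.exp (-lam₂ * τ))
    (G : Matrix (Fin 4) (Fin 4) ℝ)
    (hG : ∀ i j : Fin 4, G i j = ∫ τ in Set.Ioo (0 : ℝ) T, φ i τ * φ j τ) :
    (∀ c : Fin 4 → ℝ,
      (∀ᵐ τ ∂(volume.restrict (Set.Ioo (0 : ℝ) T)),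
        ∑ i : Fin 4, c i * φ i τ = 0) → ∀ i : Fin 4, c i = 0) ∧
    G.IsSymm ∧ G.PosDef := by
  have hφ : φ = ![fun _ => 1, nssSlope lam₁, nssCurvature lam₁, nssCurvature lam₂] := by
    funext i τ
    fin_cases i
    exacts [hφ0 τ, hφ1 τ, hφ2 τ, hφ3 τ]
  have hindep : ∀ c : Fin 4 → ℝ, (∀ᵐ τ ∂(volume.restrict (Ioo (0 : ℝ) T)),
      ∑ i : Fin 4, c i * φ i τ = 0) → ∀ i : Fin 4, c i = 0 := by
    intro c hc
    obtain ⟨h0, h1, h2, h3⟩ := nss_coeffs_eq_zero_of_ae_eq_zero h₁ h₂ hne hT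
      (hc.mono fun τ hτ => by simpa [hφ, Fin.sum_univ_four] using hτ)
    intro i
    fin_cases i <;> assumption
  have hnonneg : ∀ᵐ τ ∂volume.restrict (Ioo 0 T), 0 ≤ τ :=
    ae_restrict_of_forall_mem measurableSet_Ioo fun τ hτ => hτ.1.le
  have hmem : ∀ i, MemLp (φ i) 2 (volume.restrict (Ioo 0 T)) := by
    rw [hφ]
    intro i
    fin_cases i
    exacts [memLp_const 1, memLp_nssSlope h₁.le hnonneg 2, memLp_nssCurvature h₁.le hnonneg 2,
      memLp_nssCurvature h₂.le hnonneg 2]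
  have hGram : G = Matrix.of fun i j => ∫ τ in Ioo 0 T, φ i τ * φ j τ := Matrix.ext hG
  have hpos : G.PosDef := hGram ▸ posDef_of_integral_mul_of_ae_independent hmem hindep
  exact ⟨hindep, isHermitian_iff_isSymm.1 hpos.isHermitian, hpos⟩
end
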